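/- The random-XZ measurement channel M_XZ factorizes as the n-fold tensor power of the single-qubit channel M^{(1)}(B) = (1/4)(Tr(BX)·X + Tr(BZ)·Z) + (1/2)Tr(B)·I; i.e., M_XZ = (M^{(1)})^{⊗n} as linear maps on n-qubit operators. -/

import Mathlib

open Matrix

noncomputable section

/-- Pauli X matrix. -/
def Xm : Matrix (Fin 2) (Fin 2) ℂ := !![0, 1; 1, 0]
/-- Pauli Y matrix. -/
def Ym : Matrix (Fin 2) (Fin 2) ℂ := !![0, -Complex.I; Complex.I, 0]
/-- Pauli Z matrix. -/
def Zm : Matrix (Fin 2) (Fin 2) ℂ := !![1, 0; 0, -1]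
/-- Hadamard matrix. -/
def Hm : Matrix (Fin 2) (Fin 2) ℂ := ((Real.sqrt 2 : ℂ))⁻¹ • !![1, 1; 1, -1]

/-- The space of `n`-qubit operators. -/
abbrev QOp (n : ℕ) := Matrix (Fin n → Fin 2) (Fin n → Fin 2) ℂ

/-- Tensor (Kronecker) product of a family of single-qubit matrices. -/
def prodMat (n : ℕ) (f : Fin n → Matrix (Fin 2) (Fin 2) ℂ) : QOp n :=
  fun b b' => ∏ i, f i (b i) (b' i)

/-- The single-qubit Paulis indexed by `Fin 4`: `0 ↦ I`, `1 ↦ X`, `2 ↦ Y`, `3 ↦ Z`. -/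
def pauli : Fin 4 → Matrix (Fin 2) (Fin 2) ℂ := ![1, Xm, Ym, Zm]

/-- An `n`-qubit Pauli string. -/
def PStr (n : ℕ) (p : Fin n → Fin 4) : QOp n := prodMat n (fun i => pauli (p i))

/-- The product measurement unitary `U = ⊗_i U^{α_i}` with `U^X = H`, `U^Z = I`;
`α i = true` means measuring site `i` in the `X` basis. -/
def Umeas (n : ℕ) (α : Fin n → Bool) : QOp n := prodMat n (fun i => if α i then Hm else 1)

/-- The random-XZ measurement channel
`M_XZ(A) = E_{U∼U_XZ} Σ_b ⟨b|UAU†|b⟩ · U†|b⟩⟨b|U`. -/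
def MXZ (n : ℕ) (A : QOp n) : QOp n :=
  ((2 : ℂ) ^ n)⁻¹ • ∑ α : Fin n → Bool, ∑ b : Fin n → Fin 2,
    ((Umeas n α * A * (Umeas n α)ᴴ) b b) •
      ((Umeas n α)ᴴ * Matrix.single b b 1 * Umeas n α)

/-- The single-qubit measurement channel `M⁽¹⁾`. -/
def M1 (B : Matrix (Fin 2) (Fin 2) ℂ) : Matrix (Fin 2) (Fin 2) ℂ :=
  (1 / 4 : ℂ) • ((B * Xm).trace • Xm + (B * Zm).trace • Zm)
    + (1 / 2 : ℂ) • B.trace • (1 : Matrix (Fin 2) (Fin 2) ℂ)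

/-!
Every ingredient of a summand of `M_XZ(⊗ᵢ Bᵢ)` (the unitary `U`, the projector `|b⟩⟨b|` and the
operator itself) is a tensor product, so each summand factorises site by site, and the sums over
`α` and `b`, which run over product index sets, distribute into a product of single-site sums.
What remains is the single-qubit identity: measuring in the `Z` basis dephases `B` to
`(Tr B · I + Tr(BZ) · Z)/2`, and measuring in the `X` basis, i.e. conjugating by `H`, which swaps
`Z` and `X`, gives `(Tr B · I + Tr(BX) · X)/2`; their average is `M⁽¹⁾(B)`.
-/

lemma inv_sqrt_two_mul_self : ((Real.sqrt 2 : ℂ))⁻¹ * ((Real.sqrt 2 : ℂ))⁻¹ = 1 / 2 := by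
  rw [← mul_inv, ← Complex.ofReal_mul, Real.mul_self_sqrt zero_le_two]
  norm_num

lemma Hm_conjTranspose : Hmᴴ = Hm := by
  ext i j
  fin_cases i <;> fin_cases j <;> simp [Hm, Complex.conj_ofReal]

lemma Hm_mul_Hm : Hm * Hm = 1 := by
  ext i j
  fin_cases i <;> fin_cases j <;>
    simp [Hm, mul_apply, Fin.sum_univ_two, inv_sqrt_two_mul_self] <;> norm_num

lemma Hm_mul_Zm_mul_Hm : Hm * Zm * Hm = Xm := by
  ext i j
  fin_cases i <;> fin_cases j <;>
    simp [Hm, Zm, Xm, mul_apply, Fin.sum_univ_two, inv_sqrt_two_mul_self] <;> norm_num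

/-- The term `⟨x|UAU†|x⟩ · U†|x⟩⟨x|U` of `M_XZ`, for a measurement in the basis `U†|x⟩`. -/
def measTerm {m : Type*} [Fintype m] [DecidableEq m] (U A : Matrix m m ℂ) (x : m) :
    Matrix m m ℂ :=
  (U * A * Uᴴ) x x • (Uᴴ * Matrix.single x x 1 * U)

lemma sum_measTerm_one (B : Matrix (Fin 2) (Fin 2) ℂ) :
    ∑ x, measTerm 1 B x = (1 / 2 : ℂ) • (B.trace • 1 + (B * Zm).trace • Zm) := by
  ext i j
  fin_cases i <;> fin_cases j <;> simp [measTerm, Zm, trace, Fin.sum_univ_two, mul_apply] <;> ring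

lemma sum_measTerm_Hm (B : Matrix (Fin 2) (Fin 2) ℂ) :
    ∑ x, measTerm Hm B x = (1 / 2 : ℂ) • (B.trace • 1 + (B * Xm).trace • Xm) := by
  have htr : (Hm * B * Hm).trace = B.trace := by
    rw [trace_mul_cycle, Hm_mul_Hm, one_mul]
  have htrZ : (Hm * B * Hm * Zm).trace = (B * Xm).trace := by
    rw [← Hm_mul_Zm_mul_Hm]
    simp only [Matrix.mul_assoc]
    rw [trace_mul_comm]
    simp only [Matrix.mul_assoc]
  calc ∑ x, measTerm Hm B x = Hm * (∑ x, measTerm 1 (Hm * B * Hm) x) * Hm := by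
        simp only [measTerm, Hm_conjTranspose, conjTranspose_one, Matrix.one_mul, Matrix.mul_one,
          Matrix.mul_sum, Matrix.sum_mul, Matrix.mul_smul, Matrix.smul_mul, Matrix.mul_assoc]
    _ = (1 / 2 : ℂ) • (B.trace • 1 + (B * Xm).trace • Xm) := by
        rw [sum_measTerm_one, htr, htrZ, ← Hm_mul_Zm_mul_Hm]
        simp only [Matrix.mul_smul, Matrix.smul_mul, Matrix.mul_add, Matrix.add_mul,
          Matrix.mul_one, Hm_mul_Hm]

lemma M1_eq_average (B : Matrix (Fin 2) (Fin 2) ℂ) :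
    M1 B = (2 : ℂ)⁻¹ • ∑ a : Bool, ∑ x, measTerm (if a then Hm else 1) B x := by
  rw [Fintype.sum_bool, if_pos rfl, if_neg Bool.false_ne_true, sum_measTerm_Hm, sum_measTerm_one,
    M1]
  module

lemma prodMat_mul (n : ℕ) (f g : Fin n → Matrix (Fin 2) (Fin 2) ℂ) :
    prodMat n f * prodMat n g = prodMat n (fun i => f i * g i) := by
  ext b b'
  simp only [mul_apply, prodMat, ← Finset.prod_mul_distrib, Fintype.prod_sum]

lemma conjTranspose_prodMat (n : ℕ) (f : Fin n → Matrix (Fin 2) (Fin 2) ℂ) :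
    (prodMat n f)ᴴ = prodMat n (fun i => (f i)ᴴ) := by
  ext b b'
  simp [prodMat, conjTranspose_apply, star_prod]

lemma single_eq_prodMat (n : ℕ) (b : Fin n → Fin 2) :
    Matrix.single b b (1 : ℂ) = prodMat n (fun i => Matrix.single (b i) (b i) 1) := by
  ext c c'
  simp [prodMat, Matrix.single, Finset.prod_boole, funext_iff, forall_and]

lemma prod_smul_prodMat (n : ℕ) (c : Fin n → ℂ) (f : Fin n → Matrix (Fin 2) (Fin 2) ℂ) :
    (∏ i, c i) • prodMat n f = prodMat n (fun i => c i • f i) := by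
  ext b b'
  simp [prodMat, Finset.prod_mul_distrib]

lemma sum_prodMat {ι : Type*} [Fintype ι] (n : ℕ) (f : Fin n → ι → Matrix (Fin 2) (Fin 2) ℂ) :
    ∑ x : Fin n → ι, prodMat n (fun i => f i (x i)) = prodMat n (fun i => ∑ y, f i y) := by
  ext b b'
  simp [prodMat, Matrix.sum_apply, Fintype.prod_sum]

lemma measTerm_prodMat (n : ℕ) (u f : Fin n → Matrix (Fin 2) (Fin 2) ℂ) (b : Fin n → Fin 2) :
    measTerm (prodMat n u) (prodMat n f) b = prodMat n (fun i => measTerm (u i) (f i) (b i)) := by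
  rw [measTerm, conjTranspose_prodMat, single_eq_prodMat, prodMat_mul, prodMat_mul, prodMat_mul,
    prodMat_mul]
  exact prod_smul_prodMat n _ _

lemma MXZ_eq_sum_measTerm (n : ℕ) (A : QOp n) :
    MXZ n A = ((2 : ℂ) ^ n)⁻¹ • ∑ α : Fin n → Bool, ∑ b, measTerm (Umeas n α) A b :=
  rfl

/-- The random-XZ channel factorizes as the `n`-fold tensor power of the single-qubit
channel `M⁽¹⁾`: it acts factor-wise on every tensor-product operator (and both sides
are linear, so this determines `M_XZ = (M⁽¹⁾)^{⊗n}`). -/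
theorem stmt4 (n : ℕ) (f : Fin n → Matrix (Fin 2) (Fin 2) ℂ) :
    MXZ n (prodMat n f) = prodMat n (fun i => M1 (f i)) := by
  let siteAvg (i : Fin n) (a : Bool) := ∑ x, measTerm (if a then Hm else 1) (f i) x
  have hscalar : ((2 : ℂ) ^ n)⁻¹ = ∏ _i : Fin n, (2 : ℂ)⁻¹ := by simp
  calc MXZ n (prodMat n f)
      = ((2 : ℂ) ^ n)⁻¹ • ∑ α : Fin n → Bool, prodMat n (fun i => siteAvg i (α i)) := by
        simp only [MXZ_eq_sum_measTerm, Umeas, measTerm_prodMat, sum_prodMat, siteAvg]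
    _ = ((2 : ℂ) ^ n)⁻¹ • prodMat n (fun i => ∑ a, siteAvg i a) := by
        rw [sum_prodMat]
    _ = prodMat n (fun i => M1 (f i)) := by
        simp only [hscalar, prod_smul_prodMat, M1_eq_average, siteAvg]
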